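/- Two-sided bounds on the standard-normal hazard-type ratios appearing in the censored Gaussian likelihood. Let φ(x) = (2π)^{−1/2}·e^{−x²/2} and Φ denote the standard normal density and CDF. Let σ > 0 and let l ≤ θ ≤ u be real numbers. Define A = φ((l−θ)/σ)/Φ((l−θ)/σ) and B = φ((u−θ)/σ)/(1 − Φ((u−θ)/σ)). Then 2·φ((l−u)/σ) ≤ A ≤ (√(2π)·Φ((l−u)/σ))^{-1} and 2·φ((l−u)/σ) ≤ B ≤ (√(2π)·Φ((l−u)/σ))^{-1}. -/
import Mathlib


open MeasureTheory ProbabilityTheory Filter Topology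
open scoped NNReal ENNReal

noncomputable section

/-- `φ`: the standard normal density `φ(x) = (2π)^{-1/2}·e^{-x²/2}`. -/
def stdGaussianPDF (x : ℝ) : ℝ := (Real.sqrt (2 * Real.pi))⁻¹ * Real.exp (-x ^ 2 / 2)

/-- `Φ`: the standard normal cumulative distribution function. -/
def stdGaussianCDF (x : ℝ) : ℝ := ((gaussianReal 0 1) (Set.Iic x)).toReal

lemma pdf_eq : gaussianPDFReal 0 1 = stdGaussianPDF := by
  ext x
  simp [gaussianPDFReal, stdGaussianPDF]

lemma pdf_pos (x : ℝ) : 0 < stdGaussianPDF x := by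
  rw [← pdf_eq]; exact gaussianPDFReal_pos 0 1 x one_ne_zero

lemma integrable_pdf : Integrable stdGaussianPDF := pdf_eq ▸ integrable_gaussianPDFReal 0 1

lemma cdf_eq (x : ℝ) : stdGaussianCDF x = ∫ t in Set.Iic x, stdGaussianPDF t := by
  rw [stdGaussianCDF, gaussianReal_apply_eq_integral 0 one_ne_zero, pdf_eq,
    ENNReal.toReal_ofReal (integral_nonneg fun t ↦ (pdf_pos t).le)]

lemma cdf_pos (x : ℝ) : 0 < stdGaussianCDF x := by
  rw [cdf_eq]
  rw [setIntegral_pos_iff_support_of_nonneg_ae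
    (ae_of_all _ fun t ↦ (pdf_pos t).le) integrable_pdf.integrableOn]
  have : Function.support stdGaussianPDF = Set.univ := by
    ext t; simp [(pdf_pos t).ne']
  rw [this, Set.univ_inter]
  simp [Real.volume_Iic]

lemma cdf_mono : Monotone stdGaussianCDF := by
  intro a b hab
  rw [cdf_eq, cdf_eq]
  exact setIntegral_mono_set integrable_pdf.integrableOn
    (ae_of_all _ fun t ↦ (pdf_pos t).le) (ae_of_all _ (Set.Iic_subset_Iic.2 hab))

lemma one_sub_cdf (y : ℝ) : 1 - stdGaussianCDF y = stdGaussianCDF (-y) := by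
  have htot : stdGaussianCDF y + ∫ t in Set.Ioi y, stdGaussianPDF t = 1 := by
    rw [cdf_eq]
    rw [intervalIntegral.integral_Iic_add_Ioi integrable_pdf.integrableOn integrable_pdf.integrableOn]
    rw [← pdf_eq]; exact integral_gaussianPDFReal_eq_one 0 one_ne_zero
  have hsym : stdGaussianCDF (-y) = ∫ t in Set.Ioi y, stdGaussianPDF t := by
    rw [cdf_eq, ← integral_comp_neg_Ioi]
    refine setIntegral_congr_fun measurableSet_Ioi fun t _ ↦ ?_
    simp [stdGaussianPDF]
  rw [hsym]; linarith

lemma cdf_zero : stdGaussianCDF 0 = 1 / 2 := by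
  have := one_sub_cdf 0
  rw [neg_zero] at this; linarith

lemma pdf_le_pdf {c x : ℝ} (hcx : c ≤ x) (hx : x ≤ 0) : stdGaussianPDF c ≤ stdGaussianPDF x := by
  unfold stdGaussianPDF
  have h : Real.exp (-c ^ 2 / 2) ≤ Real.exp (-x ^ 2 / 2) := by
    apply Real.exp_le_exp.2; nlinarith
  have : (0:ℝ) ≤ (Real.sqrt (2 * Real.pi))⁻¹ := by positivity
  nlinarith

lemma pdf_le (x : ℝ) : stdGaussianPDF x ≤ (Real.sqrt (2 * Real.pi))⁻¹ := by
  unfold stdGaussianPDF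
  calc (Real.sqrt (2 * Real.pi))⁻¹ * Real.exp (-x ^ 2 / 2)
      ≤ (Real.sqrt (2 * Real.pi))⁻¹ * 1 := by
        have h : Real.exp (-x ^ 2 / 2) ≤ 1 := by
          rw [← Real.exp_zero]; apply Real.exp_le_exp.2; nlinarith
        have : (0:ℝ) ≤ (Real.sqrt (2 * Real.pi))⁻¹ := by positivity
        nlinarith
    _ = _ := mul_one _

lemma key {c x : ℝ} (hcx : c ≤ x) (hx0 : x ≤ 0) :
    2 * stdGaussianPDF c ≤ stdGaussianPDF x / stdGaussianCDF x ∧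
    stdGaussianPDF x / stdGaussianCDF x ≤ (Real.sqrt (2 * Real.pi) * stdGaussianCDF c)⁻¹ := by
  have hΦx := cdf_pos x
  have hΦc := cdf_pos c
  constructor
  · rw [le_div_iff₀ hΦx]
    have h1 : stdGaussianCDF x ≤ 1 / 2 := cdf_zero ▸ cdf_mono hx0
    have h2 := pdf_le_pdf hcx hx0
    have := (pdf_pos c).le
    nlinarith
  · rw [mul_inv, div_le_iff₀ hΦx, mul_comm, ← mul_assoc]
    have h3 : stdGaussianCDF c ≤ stdGaussianCDF x := cdf_mono hcx
    have h4 := pdf_le x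
    calc stdGaussianPDF x ≤ (Real.sqrt (2 * Real.pi))⁻¹ := h4
      _ = (Real.sqrt (2 * Real.pi))⁻¹ * (stdGaussianCDF c)⁻¹ * stdGaussianCDF c := by
          field_simp
      _ ≤ (Real.sqrt (2 * Real.pi))⁻¹ * (stdGaussianCDF c)⁻¹ * stdGaussianCDF x := by
          have : (0:ℝ) ≤ (Real.sqrt (2 * Real.pi))⁻¹ * (stdGaussianCDF c)⁻¹ := by positivity
          nlinarith
      _ = stdGaussianCDF x * (√(2 * Real.pi))⁻¹ * (stdGaussianCDF c)⁻¹ := by ring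

/-- **Two-sided bounds on the standard-normal hazard-type ratios appearing in the
censored Gaussian likelihood.**  For `σ > 0` and `l ≤ θ ≤ u`, setting
`A = φ((l-θ)/σ)/Φ((l-θ)/σ)` and `B = φ((u-θ)/σ)/(1-Φ((u-θ)/σ))`, both `A` and `B`
lie between `2·φ((l-u)/σ)` and `(√(2π)·Φ((l-u)/σ))⁻¹`. -/
theorem hazard_type_ratio_bounds
    (σ l θ u : ℝ) (hσ : 0 < σ) (hlθ : l ≤ θ) (hθu : θ ≤ u) :
    (2 * stdGaussianPDF ((l - u) / σ)
        ≤ stdGaussianPDF ((l - θ) / σ) / stdGaussianCDF ((l - θ) / σ)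
      ∧ stdGaussianPDF ((l - θ) / σ) / stdGaussianCDF ((l - θ) / σ)
        ≤ (Real.sqrt (2 * Real.pi) * stdGaussianCDF ((l - u) / σ))⁻¹)
    ∧ (2 * stdGaussianPDF ((l - u) / σ)
        ≤ stdGaussianPDF ((u - θ) / σ) / (1 - stdGaussianCDF ((u - θ) / σ))
      ∧ stdGaussianPDF ((u - θ) / σ) / (1 - stdGaussianCDF ((u - θ) / σ))
        ≤ (Real.sqrt (2 * Real.pi) * stdGaussianCDF ((l - u) / σ))⁻¹) := by
  constructor
  · exact key (by apply div_le_div_of_nonneg_right (by linarith) hσ.le)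
      (div_nonpos_of_nonpos_of_nonneg (by linarith) hσ.le)
  · have hy : (u - θ) / σ = -(((θ - u)) / σ) := by ring
    have h1 : 1 - stdGaussianCDF ((u - θ) / σ) = stdGaussianCDF ((θ - u) / σ) := by
      rw [hy, one_sub_cdf, neg_neg]
    have h2 : stdGaussianPDF ((u - θ) / σ) = stdGaussianPDF ((θ - u) / σ) := by
      rw [hy]; simp [stdGaussianPDF]
    rw [h1, h2]
    exact key (by apply div_le_div_of_nonneg_right (by linarith) hσ.le)
      (div_nonpos_of_nonpos_of_nonneg (by linarith) hσ.le)
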